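/- arXiv:1808.09489 — 2 statements merged into one kernel-verified Lean document; each statement's English description precedes it below -/
import Mathlib

section
/- Consider the Krasulina Rayleigh quotient recursion: if V' = V − γξ with ⟨ξ, V⟩ = 0, then μ(V') = c·(μ(V) − 2γ(f(V) + Z) + γ²⟨Σξ, ξ⟩/‖V‖²), where μ(W) = ⟨ΣW, W⟩/‖W‖², c = (1 + γ²‖ξ‖²/‖V‖²)^{-1}, f(V) = ‖ΣV‖²/‖V‖² − μ(V)², and Z = ⟨ξ, ΣV⟩/‖V‖² − f(V). -/
open RealInnerProductSpace

/-- One-step exact evolution equation for the Rayleigh quotient in Krasulina's scheme. -/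
theorem krasulina_rayleigh_recursion {d : ℕ}
    (S : EuclideanSpace ℝ (Fin d) →L[ℝ] EuclideanSpace ℝ (Fin d))
    (hsym : IsSelfAdjoint S)
    (V ξ : EuclideanSpace ℝ (Fin d)) (hV : V ≠ 0) (γ : ℝ)
    (horth : ⟪ξ, V⟫ = 0) (hV' : V - γ • ξ ≠ 0) :
    ⟪S (V - γ • ξ), V - γ • ξ⟫ / ‖V - γ • ξ‖ ^ 2 =
      (1 + γ ^ 2 * ‖ξ‖ ^ 2 / ‖V‖ ^ 2)⁻¹ *
        (⟪S V, V⟫ / ‖V‖ ^ 2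
          - 2 * γ * ((‖S V‖ ^ 2 / ‖V‖ ^ 2 - (⟪S V, V⟫ / ‖V‖ ^ 2) ^ 2) +
              (⟪ξ, S V⟫ / ‖V‖ ^ 2 - (‖S V‖ ^ 2 / ‖V‖ ^ 2 - (⟪S V, V⟫ / ‖V‖ ^ 2) ^ 2)))
          + γ ^ 2 * ⟪S ξ, ξ⟫ / ‖V‖ ^ 2) := by
  have hVpos : (0:ℝ) < ‖V‖ ^ 2 := by
    have := norm_pos_iff.mpr hV
    positivity
  have hsa : ∀ x y : EuclideanSpace ℝ (Fin d), ⟪S x, y⟫ = ⟪x, S y⟫ := by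
    intro x y
    exact hsym.isSymmetric x y
  have hVx : ⟪V, ξ⟫ = 0 := by rw [real_inner_comm]; exact horth
  have hnorm : ‖V - γ • ξ‖ ^ 2 = ‖V‖ ^ 2 + γ ^ 2 * ‖ξ‖ ^ 2 := by
    rw [norm_sub_sq_real, real_inner_smul_right, hVx, norm_smul]
    simp [mul_pow]
  have hinner : ⟪S (V - γ • ξ), V - γ • ξ⟫ =
      ⟪S V, V⟫ - 2 * γ * ⟪ξ, S V⟫ + γ ^ 2 * ⟪S ξ, ξ⟫ := by
    simp only [map_sub, map_smul, inner_sub_left, inner_sub_right,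
      real_inner_smul_left, real_inner_smul_right, hsa ξ V]
    rw [real_inner_comm (S V) ξ]
    ring
  have hN'pos : (0:ℝ) < ‖V - γ • ξ‖ ^ 2 := by
    have := norm_pos_iff.mpr hV'
    positivity
  have hden : (0:ℝ) < ‖V‖ ^ 2 + γ ^ 2 * ‖ξ‖ ^ 2 := by
    rw [← hnorm]; exact hN'pos
  rw [hinner, hnorm]
  have h1 : (1 + γ ^ 2 * ‖ξ‖ ^ 2 / ‖V‖ ^ 2) = (‖V‖ ^ 2 + γ ^ 2 * ‖ξ‖ ^ 2) / ‖V‖ ^ 2 := by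
    field_simp
  rw [h1]
  field_simp
  ring
end

section
/- Let Σ be symmetric PSD with eigenvalues λ_1 < λ_2 ≤ ... ≤ λ_d and orthonormal eigenvectors θ_1, ..., θ_d. Suppose {V_n} is a sequence of nonzero vectors with ‖V_n‖ bounded above and below away from zero, such that f(V_n) → 0 and μ(V_n) → λ_1, where μ(V) = ⟨ΣV, V⟩/‖V‖² and f(V) = ‖ΣV‖²/‖V‖² − μ(V)². Then ⟨V_n, θ_i⟩ → 0 for every i ≥ 2, i.e., V_n − ⟨V_n, θ_1⟩θ_1 → 0. -/
open RealInnerProductSpace Filter Topology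

/-!
The variance functional is the squared residual of the Rayleigh quotient:
`f(V) ‖V‖² = ‖T V - μ(V) V‖²`, so for bounded `V n` the residuals `T (V n) - μ(V n) V n`
tend to zero. Pairing the residual with an eigenvector `θ i` gives `(λ i - μ(V n)) ⟪V n, θ i⟫`,
and for `i ≠ 0` the factor tends to `λ i - λ 0 ≠ 0` by the spectral gap, so `⟪V n, θ i⟫ → 0`.
-/

section

variable {E : Type*} [NormedAddCommGroup E] [InnerProductSpace ℝ E] {α : Type*} {l : Filter α}

theorem norm_sub_inner_div_smul_sq (w : E) {v : E} (hv : v ≠ 0) :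
    ‖w - (⟪w, v⟫ / ‖v‖ ^ 2) • v‖ ^ 2 =
      (‖w‖ ^ 2 / ‖v‖ ^ 2 - (⟪w, v⟫ / ‖v‖ ^ 2) ^ 2) * ‖v‖ ^ 2 := by
  have hv2 : ‖v‖ ^ 2 ≠ 0 := by positivity
  rw [norm_sub_sq_real, norm_smul, real_inner_smul_right, Real.norm_eq_abs, mul_pow, sq_abs]
  field_simp
  ring

theorem tendsto_sub_inner_div_smul_zero {w V : α → E} (hV : ∀ n, V n ≠ 0) {M : ℝ}
    (hM : ∀ n, ‖V n‖ ≤ M)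
    (hf : Tendsto (fun n => ‖w n‖ ^ 2 / ‖V n‖ ^ 2 - (⟪w n, V n⟫ / ‖V n‖ ^ 2) ^ 2) l (𝓝 0)) :
    Tendsto (fun n => w n - (⟪w n, V n⟫ / ‖V n‖ ^ 2) • V n) l (𝓝 0) := by
  have hbdd : IsBoundedUnder (· ≤ ·) l (fun n => ‖‖V n‖ ^ 2‖) :=
    isBoundedUnder_of ⟨M ^ 2, fun n => by
      rw [Real.norm_eq_abs, abs_of_nonneg (by positivity)]
      exact pow_le_pow_left₀ (norm_nonneg _) (hM n) 2⟩
  have hsq := hf.zero_mul_isBoundedUnder_le hbdd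
  simp only [← norm_sub_inner_div_smul_sq _ (hV _)] at hsq
  rw [tendsto_zero_iff_norm_tendsto_zero]
  simpa using hsq.sqrt

theorem LinearMap.IsSymmetric.tendsto_inner_eigenvector_zero {T : E →ₗ[ℝ] E}
    (hT : T.IsSymmetric) {u : E} {c ℓ : ℝ} (hu : T u = c • u) (hc : c ≠ ℓ)
    {V : α → E} {μ : α → ℝ} (hμ : Tendsto μ l (𝓝 ℓ))
    (hres : Tendsto (fun n => T (V n) - μ n • V n) l (𝓝 0)) :
    Tendsto (fun n => ⟪V n, u⟫) l (𝓝 0) := by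
  have hinner : ∀ n, ⟪T (V n) - μ n • V n, u⟫ = (c - μ n) * ⟪V n, u⟫ := fun n => by
    rw [inner_sub_left, hT, hu, real_inner_smul_right, real_inner_smul_left]
    ring
  have hshift : Tendsto (fun n => c - μ n) l (𝓝 (c - ℓ)) := tendsto_const_nhds.sub hμ
  have hlim := (hres.inner tendsto_const_nhds (g := fun _ => u)).div hshift
    (sub_ne_zero.2 hc)
  rw [inner_zero_left, zero_div] at hlim
  refine hlim.congr' ?_
  filter_upwards [hshift.eventually_ne (sub_ne_zero.2 hc)] with n hn
  rw [Pi.div_apply, hinner, mul_div_cancel_left₀ _ hn]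

theorem OrthonormalBasis.tendsto_sub_inner_smul_zero {ι : Type*} [Fintype ι]
    [DecidableEq ι] (b : OrthonormalBasis ι ℝ E) {i₀ : ι} {V : α → E}
    (h : ∀ i, i ≠ i₀ → Tendsto (fun n => ⟪V n, b i⟫) l (𝓝 0)) :
    Tendsto (fun n => V n - ⟪V n, b i₀⟫ • b i₀) l (𝓝 0) := by
  have hexp : ∀ n, V n - ⟪V n, b i₀⟫ • b i₀ = ∑ i ∈ Finset.univ.erase i₀, ⟪V n, b i⟫ • b i :=
    fun n => by
      rw [Finset.sum_erase_eq_sub (Finset.mem_univ i₀)]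
      simp only [real_inner_comm (b _), b.sum_repr']
  simp only [hexp]
  simpa only [zero_smul, Finset.sum_const_zero] using
    tendsto_finsetSum _ fun i hi => (h i (Finset.ne_of_mem_erase hi)).smul_const (b i)

end

theorem alignment_of_rayleigh_convergence_general {d : ℕ}
    (T : EuclideanSpace ℝ (Fin (d + 2)) →L[ℝ] EuclideanSpace ℝ (Fin (d + 2)))
    (hsym : IsSelfAdjoint T)
    (θ : OrthonormalBasis (Fin (d + 2)) ℝ (EuclideanSpace ℝ (Fin (d + 2))))
    (lam : Fin (d + 2) → ℝ) (heig : ∀ j, T (θ j) = lam j • θ j)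
    (hmono : Monotone lam) (hgap : lam 0 < lam 1)
    (V : ℕ → EuclideanSpace ℝ (Fin (d + 2))) (hV : ∀ n, V n ≠ 0)
    (m M : ℝ) (hbound : ∀ n, m ≤ ‖V n‖ ∧ ‖V n‖ ≤ M)
    (hf : Tendsto (fun n =>
        ‖T (V n)‖ ^ 2 / ‖V n‖ ^ 2 - (⟪T (V n), V n⟫ / ‖V n‖ ^ 2) ^ 2) atTop (nhds 0))
    (hμ : Tendsto (fun n => ⟪T (V n), V n⟫ / ‖V n‖ ^ 2) atTop (nhds (lam 0))) :
    (∀ i, i ≠ 0 → Tendsto (fun n => ⟪V n, θ i⟫) atTop (nhds 0)) ∧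
      Tendsto (fun n => V n - ⟪V n, θ 0⟫ • θ 0) atTop (nhds 0) := by
  have hres : Tendsto (fun n => T (V n) - (⟪T (V n), V n⟫ / ‖V n‖ ^ 2) • V n) atTop (𝓝 0) :=
    tendsto_sub_inner_div_smul_zero hV (fun n => (hbound n).2) hf
  have hcoef : ∀ i, i ≠ 0 → Tendsto (fun n => ⟪V n, θ i⟫) atTop (𝓝 0) := fun i hi =>
    hsym.isSymmetric.tendsto_inner_eigenvector_zero (heig i)
      (hgap.trans_le (hmono (Fin.one_le_of_ne_zero hi))).ne' hμ hres
  exact ⟨hcoef, θ.tendsto_sub_inner_smul_zero hcoef⟩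

/-- If the Rayleigh quotient converges to the (simple) smallest eigenvalue and the
    variance functional tends to zero, the iterates align with the bottom eigenvector. -/
theorem alignment_of_rayleigh_convergence {d : ℕ}
    (T : EuclideanSpace ℝ (Fin (d + 2)) →L[ℝ] EuclideanSpace ℝ (Fin (d + 2)))
    (hsym : IsSelfAdjoint T) (hpsd : ∀ v, 0 ≤ ⟪T v, v⟫)
    (θ : OrthonormalBasis (Fin (d + 2)) ℝ (EuclideanSpace ℝ (Fin (d + 2))))
    (lam : Fin (d + 2) → ℝ) (heig : ∀ j, T (θ j) = lam j • θ j)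
    (hmono : Monotone lam) (hgap : lam 0 < lam 1)
    (V : ℕ → EuclideanSpace ℝ (Fin (d + 2))) (hV : ∀ n, V n ≠ 0)
    (m M : ℝ) (hm : 0 < m) (hbound : ∀ n, m ≤ ‖V n‖ ∧ ‖V n‖ ≤ M)
    (hf : Tendsto (fun n =>
        ‖T (V n)‖ ^ 2 / ‖V n‖ ^ 2 - (⟪T (V n), V n⟫ / ‖V n‖ ^ 2) ^ 2) atTop (nhds 0))
    (hμ : Tendsto (fun n => ⟪T (V n), V n⟫ / ‖V n‖ ^ 2) atTop (nhds (lam 0))) :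
    (∀ i, i ≠ 0 → Tendsto (fun n => ⟪V n, θ i⟫) atTop (nhds 0)) ∧
      Tendsto (fun n => V n - ⟪V n, θ 0⟫ • θ 0) atTop (nhds 0) :=
  alignment_of_rayleigh_convergence_general T hsym θ lam heig hmono hgap V hV m M hbound hf hμ
end
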